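/- The symmetric space identity s_g ∘ s_{g'} ∘ s_g = s_{s_g(g')} holds for all g, g' ∈ G. -/

import Mathlib

open Real
noncomputable section

abbrev G (d : ℕ) := ℝ × ((Fin d → ℝ) × (Fin d → ℝ)) × ℝ

/-- The standard symplectic form on ℝ^{2d}, with v = (n, m). -/
def omega0 {d : ℕ} (v w : (Fin d → ℝ) × (Fin d → ℝ)) : ℝ :=
  ∑ i, (v.1 i * w.2 i - v.2 i * w.1 i)

/-- The group law (a,v,t)(a',v',t') = (a+a', e^{-a'}v+v', e^{-2a'}t+t'+(1/2)e^{-a'}ω₀(v,v')). -/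
def gmul {d : ℕ} (g h : G d) : G d :=
  (g.1 + h.1, Real.exp (-h.1) • g.2.1 + h.2.1,
    Real.exp (-(2 * h.1)) * g.2.2 + h.2.2 + (1/2) * Real.exp (-h.1) * omega0 g.2.1 h.2.1)

/-- The identity element (0,0,0). -/
def gone {d : ℕ} : G d := (0, 0, 0)

/-- The inverse (a,v,t)^{-1} = (-a, -e^a v, -e^{2a} t). -/
def ginv {d : ℕ} (g : G d) : G d :=
  (-g.1, -(Real.exp g.1 • g.2.1), -(Real.exp (2 * g.1) * g.2.2))

/-- The symmetry s_g at the point g. -/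
def ssym {d : ℕ} (g g' : G d) : G d :=
  (2 * g.1 - g'.1, (2 * Real.cosh (g.1 - g'.1)) • g.2.1 - g'.2.1,
    2 * g.2.2 * Real.cosh (2 * g.1 - 2 * g'.1) - g'.2.2
      + omega0 g.2.1 g'.2.1 * Real.sinh (g.1 - g'.1))

/-- The two-point phase S(g₁,g₂). -/
def Sph {d : ℕ} (g₁ g₂ : G d) : ℝ :=
  Real.sinh (2 * g₁.1) * g₂.2.2 - Real.sinh (2 * g₂.1) * g₁.2.2
    + Real.cosh g₁.1 * Real.cosh g₂.1 * omega0 g₁.2.1 g₂.2.1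

/-- The two-point amplitude A(g₁,g₂). -/
def Aamp {d : ℕ} (g₁ g₂ : G d) : ℝ :=
  (Real.cosh g₁.1 * Real.cosh g₂.1 * Real.cosh (g₁.1 - g₂.1)) ^ d *
    Real.sqrt (Real.cosh (2 * g₁.1) * Real.cosh (2 * g₂.1) * Real.cosh (2 * g₁.1 - 2 * g₂.1))

/-- The two-point kernel K_θ(g₁,g₂) = (4/(πθ)^{2d+2}) A(g₁,g₂) exp((2i/θ) S(g₁,g₂)). -/
def Kker {d : ℕ} (θ : ℝ) (g₁ g₂ : G d) : ℂ :=
  (4 / (Real.pi * θ) ^ (2 * d + 2) : ℝ) * (Aamp g₁ g₂ : ℝ) *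
    Complex.exp ((2 * Complex.I / (θ : ℂ)) * (Sph g₁ g₂ : ℝ))

/-! The identity is a direct computation. With α = a - b and γ = a - c the differences of the
ℝ-coordinates of g = (a, v, t), g' = (b, w, s) and h = (c, u, r), both sides are affine in
v, w, u, t, s, r; after expanding ω₀ bilinearly, comparing coefficients leaves only
product-to-sum formulas for cosh and sinh at combinations of α and γ. -/

namespace Real

lemma two_mul_cosh_mul_cosh (x y : ℝ) : 2 * cosh x * cosh y = cosh (x + y) + cosh (x - y) := by
  rw [cosh_add, cosh_sub]; ring

lemma two_mul_sinh_mul_cosh (x y : ℝ) : 2 * sinh x * cosh y = sinh (x + y) + sinh (x - y) := by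
  rw [sinh_add, sinh_sub]; ring

lemma two_mul_cosh_mul_sinh (x y : ℝ) : 2 * cosh x * sinh y = sinh (x + y) - sinh (x - y) := by
  rw [sinh_add, sinh_sub]; ring

end Real

section Omega0

variable {d : ℕ} (v w u : (Fin d → ℝ) × (Fin d → ℝ))

lemma omega0_smul_left (c : ℝ) : omega0 (c • v) w = c * omega0 v w := by
  simp only [omega0, Finset.mul_sum]
  refine Finset.sum_congr rfl fun i _ => ?_
  simp only [Prod.smul_fst, Prod.smul_snd, Pi.smul_apply, smul_eq_mul]
  ring

lemma omega0_smul_right (c : ℝ) : omega0 v (c • w) = c * omega0 v w := by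
  simp only [omega0, Finset.mul_sum]
  refine Finset.sum_congr rfl fun i _ => ?_
  simp only [Prod.smul_fst, Prod.smul_snd, Pi.smul_apply, smul_eq_mul]
  ring

lemma omega0_sub_left : omega0 (v - w) u = omega0 v u - omega0 w u := by
  simp only [omega0, ← Finset.sum_sub_distrib]
  refine Finset.sum_congr rfl fun i _ => ?_
  simp only [Prod.fst_sub, Prod.snd_sub, Pi.sub_apply]
  ring

lemma omega0_sub_right : omega0 v (w - u) = omega0 v w - omega0 v u := by
  simp only [omega0, ← Finset.sum_sub_distrib]
  refine Finset.sum_congr rfl fun i _ => ?_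
  simp only [Prod.fst_sub, Prod.snd_sub, Pi.sub_apply]
  ring

lemma omega0_swap : omega0 w v = -omega0 v w := by
  simp only [omega0, ← Finset.sum_neg_distrib]
  exact Finset.sum_congr rfl fun i _ => by ring

lemma omega0_self : omega0 v v = 0 := by
  linarith [omega0_swap v v]

end Omega0

section SymmetricSpace

variable {d : ℕ} (a α γ t s r : ℝ) (v w u : (Fin d → ℝ) × (Fin d → ℝ))

lemma ssym_ssym_ssym_snd_fst :
    (ssym (a, v, t) (ssym (a - α, w, s) (ssym (a, v, t) (a - γ, u, r)))).2.1
      = (ssym (ssym (a, v, t) (a - α, w, s)) (a - γ, u, r)).2.1 := by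
  simp only [ssym]
  match_scalars
  · linear_combination (norm := ring_nf) -2 * two_mul_cosh_mul_cosh (α + γ) α
  · linear_combination (norm := ring_nf) -2 * cosh_neg (α + γ)
  · ring

lemma ssym_ssym_ssym_snd_snd :
    (ssym (a, v, t) (ssym (a - α, w, s) (ssym (a, v, t) (a - γ, u, r)))).2.2
      = (ssym (ssym (a, v, t) (a - α, w, s)) (a - γ, u, r)).2.2 := by
  simp only [ssym, omega0_sub_left, omega0_sub_right, omega0_smul_left, omega0_smul_right,
    omega0_self, omega0_swap v w]
  -- the coefficients of ω₀(v, w) are both sinh (3α + 2γ) - sinh (α + 2γ)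
  linear_combination (norm := ring_nf)
    -2 * t * two_mul_cosh_mul_cosh (2 * α + 2 * γ) (2 * α) - 2 * s * cosh_neg (2 * α + 2 * γ)
    - omega0 v u * two_mul_sinh_mul_cosh (α + γ) α + omega0 w u * sinh_neg (α + γ)
    + omega0 v w * (2 * cosh γ * sinh_neg (α + γ) - two_mul_sinh_mul_cosh (α + γ) γ
      + 2 * sinh (2 * α + γ) * cosh_neg (α + γ) + two_mul_sinh_mul_cosh (2 * α + γ) (α + γ)
      - two_mul_cosh_mul_sinh (2 * α + 2 * γ) α)

end SymmetricSpace

theorem ssym_symmetric_space (d : ℕ) (g g' h : G d) :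
    ssym g (ssym g' (ssym g h)) = ssym (ssym g g') h := by
  obtain ⟨a, v, t⟩ := g
  obtain ⟨b, w, s⟩ := g'
  obtain ⟨c, u, r⟩ := h
  obtain ⟨α, rfl⟩ : ∃ α, b = a - α := ⟨a - b, by ring⟩
  obtain ⟨γ, rfl⟩ : ∃ γ, c = a - γ := ⟨a - c, by ring⟩
  refine Prod.ext ?_ (Prod.ext ?_ ?_)
  · simp only [ssym]; ring
  · exact ssym_ssym_ssym_snd_fst a α γ t s r v w u
  · exact ssym_ssym_ssym_snd_snd a α γ t s r v w u
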